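/- arXiv:2009.09409 — 3 statements merged into one kernel-verified Lean document; each statement's English description precedes it below -/
import Mathlib

section
/- For all n ≥ 0 and all complex x, ∑_{k=0}^{n} C(n,k) C_{2(n-k)}(x) (12x√(9x²-1))^k E_k(x) = (18x² - 1 + 6x(2x-1)√(9x²-1))^n, where C_m(x) are Lucas-balancing polynomials and E_k(x) are Euler polynomials. -/
def lucas : ℕ → ℕ
  | 0 => 2
  | 1 => 1
  | n + 2 => lucas (n + 1) + lucas n

noncomputable def eulerPoly : ℕ → Polynomial ℚ
  | n => Polynomial.X ^ n - Polynomial.C (1/2 : ℚ) *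
      ∑ k : Fin n, (n.choose k : ℚ) • eulerPoly k

noncomputable def eulerNumber (n : ℕ) : ℚ := 2 ^ n * (eulerPoly n).eval (1/2)


noncomputable def balancingPoly (x : ℂ) : ℕ → ℂ
  | 0 => 0
  | 1 => 1
  | n + 2 => 6 * x * balancingPoly x (n + 1) - balancingPoly x n

noncomputable def lucasBalancingPoly (x : ℂ) : ℕ → ℂ
  | 0 => 1
  | 1 => 3 * x
  | n + 2 => 6 * x * lucasBalancingPoly x (n + 1) - lucasBalancingPoly x n

open Finset Polynomial

/-- evaluated Euler polynomial -/
noncomputable def E (x : ℂ) (k : ℕ) : ℂ := Polynomial.aeval x (eulerPoly k)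

lemma euler_eval (x : ℂ) (n : ℕ) :
    E x n = x ^ n - (1/2 : ℂ) * ∑ k ∈ range n, (n.choose k : ℂ) * E x k := by
  rw [E, eulerPoly]
  simp only [map_sub, map_pow, aeval_X, map_mul, map_sum, map_smul, aeval_C]
  rw [Fin.sum_univ_eq_sum_range (fun k => (n.choose k : ℚ) • Polynomial.aeval x (eulerPoly k))]
  have h2 : (algebraMap ℚ ℂ) (1/2 : ℚ) = (1/2 : ℂ) := by norm_num
  rw [h2]
  congr 1

lemma euler_key (x : ℂ) (n : ℕ) :
    ∑ k ∈ range (n + 1), (n.choose k : ℂ) * E x k + E x n = 2 * x ^ n := by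
  rw [Finset.sum_range_succ, Nat.choose_self]
  have h := euler_eval x n
  have : E x n = x ^ n - (1/2 : ℂ) * ∑ k ∈ range n, (n.choose k : ℂ) * E x k := h
  rw [this]; ring

lemma tri_swap (n : ℕ) (g : ℕ → ℕ → ℂ) :
    ∑ k ∈ range (n + 1), ∑ j ∈ range (n + 1 - k), g k j
      = ∑ m ∈ range (n + 1), ∑ k ∈ range (m + 1), g k (m - k) := by
  have h1 : ∀ k, ∑ j ∈ range (n + 1 - k), g k j = ∑ m ∈ Ico k (n + 1), g k (m - k) := by
    intro k
    rw [Finset.sum_Ico_eq_sum_range]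
    apply Finset.sum_congr rfl
    intro j _
    rw [Nat.add_sub_cancel_left]
  simp only [h1]
  refine Finset.sum_comm' ?_
  intro k m
  simp only [Finset.mem_range, Finset.mem_Ico]
  omega

lemma choose_tri {n m k : ℕ} (hk : k ≤ m) (hm : m ≤ n) :
    ((n.choose k : ℂ)) * ((n - k).choose (m - k) : ℂ) = (n.choose m : ℂ) * (m.choose k : ℂ) := by
  have := Nat.choose_mul (n := n) hk
  rw [← Nat.cast_mul, ← Nat.cast_mul, this]

/-- the homogenized Euler identity -/
lemma euler_homog (x a b : ℂ) (n : ℕ) :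
    ∑ k ∈ range (n + 1), (n.choose k : ℂ) * b ^ k * E x k * ((a + b) ^ (n - k) + a ^ (n - k))
      = 2 * (a + b * x) ^ n := by
  have expand : ∀ k ∈ range (n + 1),
      (n.choose k : ℂ) * b ^ k * E x k * ((a + b) ^ (n - k) + a ^ (n - k))
        = (∑ j ∈ range (n + 1 - k), (n.choose k : ℂ) * ((n - k).choose j : ℂ)
            * b ^ (k + j) * a ^ (n - k - j) * E x k)
          + (n.choose k : ℂ) * b ^ k * a ^ (n - k) * E x k := by
    intro k hk
    rw [mem_range] at hk
    have hkn : k ≤ n := Nat.lt_succ_iff.mp hk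
    rw [add_comm a b, add_pow]
    have hr : n - k + 1 = n + 1 - k := by omega
    rw [mul_add]
    congr 1
    · rw [Finset.mul_sum, ← hr]
      apply Finset.sum_congr rfl
      intro j hj
      rw [mem_range, Nat.lt_succ_iff] at hj
      rw [pow_add]
      ring
    · ring
  rw [Finset.sum_congr rfl expand, Finset.sum_add_distrib,
    tri_swap n (fun k j => (n.choose k : ℂ) * ((n - k).choose j : ℂ)
      * b ^ (k + j) * a ^ (n - k - j) * E x k)]
  have step : ∀ m ∈ range (n + 1),
      ∑ k ∈ range (m + 1), (n.choose k : ℂ) * ((n - k).choose (m - k) : ℂ)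
          * b ^ (k + (m - k)) * a ^ (n - k - (m - k)) * E x k
        = (n.choose m : ℂ) * b ^ m * a ^ (n - m)
            * ∑ k ∈ range (m + 1), (m.choose k : ℂ) * E x k := by
    intro m hm
    rw [mem_range, Nat.lt_succ_iff] at hm
    rw [Finset.mul_sum]
    apply Finset.sum_congr rfl
    intro k hk
    rw [mem_range, Nat.lt_succ_iff] at hk
    have h1 : k + (m - k) = m := by omega
    have h2 : n - k - (m - k) = n - m := by omega
    rw [h1, h2, choose_tri hk hm]
    ring
  rw [Finset.sum_congr rfl step]
  have merge : (∑ m ∈ range (n + 1), (n.choose m : ℂ) * b ^ m * a ^ (n - m)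
        * ∑ k ∈ range (m + 1), (m.choose k : ℂ) * E x k)
      + ∑ k ∈ range (n + 1), (n.choose k : ℂ) * b ^ k * a ^ (n - k) * E x k
      = ∑ m ∈ range (n + 1), (n.choose m : ℂ) * b ^ m * a ^ (n - m) * (2 * x ^ m) := by
    rw [← Finset.sum_add_distrib]
    apply Finset.sum_congr rfl
    intro m _
    rw [← euler_key x m]
    ring
  rw [merge]
  rw [add_comm a (b * x), add_pow]
  rw [Finset.mul_sum]
  apply Finset.sum_congr rfl
  intro m _
  rw [mul_pow]
  ring

lemma lucas_closed (x s : ℂ) (hs : s ^ 2 = 9 * x ^ 2 - 1) (m : ℕ) :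
    2 * lucasBalancingPoly x m = (3 * x + s) ^ m + (3 * x - s) ^ m := by
  induction m using Nat.twoStepInduction with
  | zero => simp [lucasBalancingPoly]; norm_num
  | one => simp [lucasBalancingPoly]; ring
  | more m ih1 ih2 =>
      rw [lucasBalancingPoly]
      have : 2 * (6 * x * lucasBalancingPoly x (m + 1) - lucasBalancingPoly x m)
          = 6 * x * (2 * lucasBalancingPoly x (m + 1)) - 2 * lucasBalancingPoly x m := by ring
      rw [this, ih2, ih1]
      have hpq : (3 * x + s) * (3 * x - s) = 1 := by
        have : (3 * x + s) * (3 * x - s) = 9 * x ^ 2 - s ^ 2 := by ring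
        rw [this, hs]; ring
      have e1 : (3 * x + s) ^ (m + 2) = (3 * x + s) ^ (m + 1) * (3 * x + s) := by ring
      have e2 : (3 * x - s) ^ (m + 2) = (3 * x - s) ^ (m + 1) * (3 * x - s) := by ring
      have e3 : (3 * x + s) ^ (m + 1) = (3 * x + s) ^ m * (3 * x + s) := by ring
      have e4 : (3 * x - s) ^ (m + 1) = (3 * x - s) ^ m * (3 * x - s) := by ring
      rw [e1, e2, e3, e4]
      linear_combination (((3 * x + s) ^ m + (3 * x - s) ^ m)) * hpq

theorem stmt16 (n : ℕ) (x s : ℂ) (hs : s ^ 2 = 9 * x ^ 2 - 1) :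
    ∑ k ∈ Finset.range (n + 1), (n.choose k : ℂ) *
      lucasBalancingPoly x (2 * (n - k)) * (12 * x * s) ^ k *
      Polynomial.aeval x (eulerPoly k)
      = (18 * x ^ 2 - 1 + 6 * x * (2 * x - 1) * s) ^ n := by
  set a : ℂ := 18 * x ^ 2 - 1 - 6 * x * s with ha
  set b : ℂ := 12 * x * s with hb
  have hlam : (3 * x + s) ^ 2 = a + b := by rw [ha, hb]; linear_combination hs
  have hmu : (3 * x - s) ^ 2 = a := by rw [ha]; linear_combination hs
  have hcoef : ∀ k ∈ range (n + 1),
      (n.choose k : ℂ) * lucasBalancingPoly x (2 * (n - k)) * (12 * x * s) ^ k *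
        Polynomial.aeval x (eulerPoly k)
      = (1/2 : ℂ) * ((n.choose k : ℂ) * b ^ k * E x k
          * ((a + b) ^ (n - k) + a ^ (n - k))) := by
    intro k _
    have hcl := lucas_closed x s hs (2 * (n - k))
    have h1 : (3 * x + s) ^ (2 * (n - k)) = (a + b) ^ (n - k) := by
      rw [pow_mul, hlam]
    have h2 : (3 * x - s) ^ (2 * (n - k)) = a ^ (n - k) := by
      rw [pow_mul, hmu]
    rw [h1, h2] at hcl
    have hL : lucasBalancingPoly x (2 * (n - k))
        = (1/2 : ℂ) * ((a + b) ^ (n - k) + a ^ (n - k)) := by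
      linear_combination hcl / 2
    rw [hL, E, hb]
    ring
  rw [Finset.sum_congr rfl hcoef, ← Finset.mul_sum, euler_homog x a b n]
  have : a + b * x = 18 * x ^ 2 - 1 + 6 * x * (2 * x - 1) * s := by rw [ha, hb]; ring
  rw [this]
  ring
end

section
/- For all n ≥ 0, j ≥ 1, and all complex x, ∑_{k=0}^{n} C(n,k) L_{jk} (√5 F_j)^{n-k} E_{n-k}(x) = 2((√5 x + β) F_j + F_{j-1})^n, where β = (1-√5)/2, F_m and L_m are Fibonacci and Lucas numbers, and E_m(x) are Euler polynomials. -/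
open Polynomial Finset

lemma aeval_eulerPoly (n : ℕ) (y : ℂ) :
    (aeval y) (eulerPoly n) =
      y ^ n - (1/2 : ℂ) * ∑ k ∈ range n, (n.choose k : ℂ) * aeval y (eulerPoly k) := by
  rw [eulerPoly]
  rw [Fin.sum_univ_eq_sum_range (fun k => (n.choose k : ℚ) • eulerPoly k) n]
  simp [smul_eq_C_mul, map_sum]

lemma sum_choose_aeval (n : ℕ) (y : ℂ) :
    ∑ k ∈ range (n + 1), (n.choose k : ℂ) * aeval y (eulerPoly k)
      = 2 * y ^ n - aeval y (eulerPoly n) := by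
  rw [sum_range_succ, Nat.choose_self]
  have h := aeval_eulerPoly n y
  have h2 : ∑ k ∈ range n, (n.choose k : ℂ) * aeval y (eulerPoly k)
      = 2 * (y ^ n - aeval y (eulerPoly n)) := by linear_combination (2 : ℂ) * h
  rw [h2]; push_cast; ring

lemma keyA (n : ℕ) (E : ℕ → ℂ) (v : ℂ) :
    ∑ k ∈ range n, ∑ m ∈ range (k + 1), ((n.choose k : ℂ) * (k.choose m : ℂ)) * E m * v ^ (k - m)
      = ∑ m ∈ range n, ∑ i ∈ range (n - m),
          ((n.choose m : ℂ) * ((n - m).choose i : ℂ)) * E m * v ^ i := by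
  have h1 : ∀ k ∈ range n, ∀ m ∈ range (k+1),
      ((n.choose k : ℂ) * (k.choose m : ℂ)) * E m * v ^ (k - m)
        = ((n.choose m : ℂ) * ((n - m).choose (k - m) : ℂ)) * E m * v ^ (k - m) := by
    intro k hk m hm
    rw [mem_range] at hk hm
    rw [← Nat.cast_mul, ← Nat.cast_mul, Nat.choose_mul (Nat.lt_succ_iff.mp hm)]
  rw [sum_congr rfl (fun k hk => sum_congr rfl (h1 k hk))]
  simp only [range_eq_Ico]
  rw [← Finset.sum_Ico_Ico_comm]
  apply sum_congr rfl
  intro m hm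
  rw [mem_Ico] at hm
  rw [Finset.sum_Ico_eq_sum_range, ← range_eq_Ico]
  apply sum_congr rfl
  intro i hi
  rw [Nat.add_sub_cancel_left]

lemma keyB (n : ℕ) (E : ℕ → ℂ) (v : ℂ) :
    ∑ k ∈ range (n + 1), ∑ m ∈ range k, ((n.choose k : ℂ) * (k.choose m : ℂ)) * E m * v ^ (n - k)
      = ∑ m ∈ range n, ∑ i ∈ range (n - m),
          ((n.choose m : ℂ) * ((n - m).choose i : ℂ)) * E m * v ^ i := by
  have h1 : ∀ k ∈ range (n+1), ∀ m ∈ range k,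
      ((n.choose k : ℂ) * (k.choose m : ℂ)) * E m * v ^ (n - k)
        = ((n.choose m : ℂ) * ((n - m).choose (k - m) : ℂ)) * E m * v ^ (n - k) := by
    intro k hk m hm
    rw [mem_range] at hk hm
    rw [← Nat.cast_mul, ← Nat.cast_mul, Nat.choose_mul (le_of_lt hm)]
  rw [sum_congr rfl (fun k hk => sum_congr rfl (h1 k hk))]
  simp only [range_eq_Ico]
  rw [← Finset.sum_Ico_Ico_comm']
  have hlast : ∑ m ∈ Finset.Ico 0 (n+1), ∑ k ∈ Finset.Ico (m+1) (n+1),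
        ((n.choose m : ℂ) * ((n - m).choose (k - m) : ℂ)) * E m * v ^ (n - k)
      = ∑ m ∈ Finset.Ico 0 n, ∑ k ∈ Finset.Ico (m+1) (n+1),
        ((n.choose m : ℂ) * ((n - m).choose (k - m) : ℂ)) * E m * v ^ (n - k) := by
    rw [← range_eq_Ico, sum_range_succ]
    simp
  rw [hlast]
  apply sum_congr rfl
  intro m hm
  rw [mem_Ico] at hm
  rw [Finset.sum_Ico_eq_sum_range, ← range_eq_Ico]
  have hN : n + 1 - (m + 1) = n - m := by omega
  rw [hN]
  have e1 : ∀ k ∈ range (n - m),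
      ((n.choose m : ℂ) * ((n - m).choose (m + 1 + k - m) : ℂ)) * E m * v ^ (n - (m + 1 + k))
        = (fun i => ((n.choose m : ℂ) * ((n - m).choose (n - m - i) : ℂ)) * E m * v ^ i)
            (n - m - 1 - k) := by
    intro k hk
    rw [mem_range] at hk
    simp only
    have h2 : m + 1 + k - m = k + 1 := by omega
    have h3 : n - (m + 1 + k) = n - m - 1 - k := by omega
    have h4 : n - m - (n - m - 1 - k) = k + 1 := by omega
    rw [h2, h3, h4]
  rw [sum_congr rfl e1, Finset.sum_range_reflect (fun i => ((n.choose m : ℂ) * ((n - m).choose (n - m - i) : ℂ)) * E m * v ^ i) (n - m)]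
  apply sum_congr rfl
  intro i hi
  rw [mem_range] at hi
  rw [Nat.choose_symm (le_of_lt hi)]

lemma appell (n : ℕ) (u v : ℂ) :
    aeval (u + v) (eulerPoly n)
      = ∑ k ∈ range (n + 1), (n.choose k : ℂ) * aeval u (eulerPoly k) * v ^ (n - k) := by
  induction n using Nat.strong_induction_on with
  | _ n ih =>
  rw [aeval_eulerPoly]
  have hL : ∑ k ∈ range n, (n.choose k : ℂ) * aeval (u + v) (eulerPoly k)
      = ∑ k ∈ range n, ∑ m ∈ range (k + 1),
          ((n.choose k : ℂ) * (k.choose m : ℂ)) * aeval u (eulerPoly m) * v ^ (k - m) := by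
    apply sum_congr rfl; intro k hk
    rw [ih k (mem_range.mp hk), mul_sum]
    exact sum_congr rfl fun m _ => by ring
  have hR : ∀ k ∈ range (n + 1), (n.choose k : ℂ) * aeval u (eulerPoly k) * v ^ (n - k)
      = (n.choose k : ℂ) * u ^ k * v ^ (n - k)
        - (1/2 : ℂ) * ∑ m ∈ range k,
            ((n.choose k : ℂ) * (k.choose m : ℂ)) * aeval u (eulerPoly m) * v ^ (n - k) := by
    intro k _
    rw [aeval_eulerPoly]
    have h : ∑ m ∈ range k,
          ((n.choose k : ℂ) * (k.choose m : ℂ)) * aeval u (eulerPoly m) * v ^ (n - k)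
        = (n.choose k : ℂ) * (∑ m ∈ range k, (k.choose m : ℂ) * aeval u (eulerPoly m))
            * v ^ (n - k) := by
      rw [mul_sum, sum_mul]
      exact sum_congr rfl fun m _ => by ring
    rw [h]; ring
  have hadd : (u + v) ^ n = ∑ k ∈ range (n + 1), (n.choose k : ℂ) * u ^ k * v ^ (n - k) := by
    rw [add_pow]
    exact sum_congr rfl fun k _ => by ring
  rw [hL, sum_congr rfl hR, Finset.sum_sub_distrib, ← Finset.mul_sum, hadd,
    keyA n (fun m => aeval u (eulerPoly m)) v, keyB n (fun m => aeval u (eulerPoly m)) v]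

lemma complement (n : ℕ) (u : ℂ) :
    aeval (u + 1) (eulerPoly n) + aeval u (eulerPoly n) = 2 * u ^ n := by
  have h := appell n u 1
  simp only [one_pow, mul_one] at h
  rw [h, sum_choose_aeval]
  ring

lemma scaled (n : ℕ) (u a s : ℂ) (hs : s ≠ 0) :
    ∑ k ∈ range (n + 1), (n.choose k : ℂ) * a ^ k * s ^ (n - k) * aeval u (eulerPoly (n - k))
      = s ^ n * aeval (u + a / s) (eulerPoly n) := by
  rw [appell n u (a / s), mul_sum,
    ← Finset.sum_range_reflect
      (fun k => (n.choose k : ℂ) * a ^ k * s ^ (n - k) * aeval u (eulerPoly (n - k))) (n + 1)]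
  apply sum_congr rfl
  intro k hk
  rw [mem_range] at hk
  have h1 : n + 1 - 1 - k = n - k := by omega
  have h2 : n - (n - k) = k := by omega
  have h3 : n.choose (n - k) = n.choose k := Nat.choose_symm (by omega)
  have h4 : s ^ n = s ^ (n - k) * s ^ k := by rw [← pow_add]; congr 1; omega
  rw [h1, h2, h3, h4, div_pow]
  field_simp
noncomputable def sq5 : ℂ := (Real.sqrt 5 : ℂ)
noncomputable def phiC : ℂ := (1 + sq5) / 2
noncomputable def psiC : ℂ := (1 - sq5) / 2

lemma sq5_sq : sq5 ^ 2 = 5 := by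
  have h : Real.sqrt 5 ^ 2 = 5 := Real.sq_sqrt (by norm_num)
  rw [sq5]
  exact_mod_cast congrArg (Complex.ofReal) h

lemma phi_add_psi : phiC + psiC = 1 := by rw [phiC, psiC]; ring

lemma phi_sub_psi : phiC - psiC = sq5 := by rw [phiC, psiC]; ring

lemma psi_sq : psiC ^ 2 = psiC + 1 := by
  rw [psiC]; linear_combination sq5_sq / 4

lemma phi_sq : phiC ^ 2 = phiC + 1 := by
  rw [phiC]; linear_combination sq5_sq / 4

lemma fibC : ∀ m : ℕ, (Nat.fib m : ℂ) * sq5 = phiC ^ m - psiC ^ m := by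
  have key : ∀ m : ℕ, (Nat.fib m : ℂ) * sq5 = phiC ^ m - psiC ^ m ∧
      (Nat.fib (m + 1) : ℂ) * sq5 = phiC ^ (m + 1) - psiC ^ (m + 1) := by
    intro m
    induction m with
    | zero => constructor <;> simp [phi_sub_psi.symm]
    | succ m ih =>
      refine ⟨ih.2, ?_⟩
      rw [Nat.fib_add_two]
      push_cast
      rw [add_mul, ih.1, ih.2]
      linear_combination -(phiC ^ m) * phi_sq + (psiC ^ m) * psi_sq
  exact fun m => (key m).1

lemma lucasC : ∀ m : ℕ, (lucas m : ℂ) = phiC ^ m + psiC ^ m := by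
  have key : ∀ m : ℕ, (lucas m : ℂ) = phiC ^ m + psiC ^ m ∧
      (lucas (m + 1) : ℂ) = phiC ^ (m + 1) + psiC ^ (m + 1) := by
    intro m
    induction m with
    | zero =>
      constructor
      · show ((2 : ℕ) : ℂ) = _
        norm_num
      · show ((1 : ℕ) : ℂ) = _
        rw [pow_one, pow_one, phi_add_psi]
        simp
    | succ m ih =>
      refine ⟨ih.2, ?_⟩
      show ((lucas (m + 1) + lucas m : ℕ) : ℂ) = _
      push_cast
      rw [ih.1, ih.2]
      linear_combination -(phiC ^ m) * phi_sq - (psiC ^ m) * psi_sq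
  exact fun m => (key m).1

lemma psi_pow : ∀ j : ℕ, psiC ^ (j + 1) = psiC * (Nat.fib (j + 1) : ℂ) + (Nat.fib j : ℂ) := by
  intro j
  induction j with
  | zero => simp
  | succ j ih =>
    rw [Nat.fib_add_two]
    push_cast
    linear_combination psiC * ih + (Nat.fib (j + 1) : ℂ) * psi_sq

theorem stmt17 (n j : ℕ) (hj : 1 ≤ j) (x : ℂ) :
    ∑ k ∈ Finset.range (n + 1), (n.choose k : ℂ) * (lucas (j * k) : ℂ) *
      ((Real.sqrt 5 : ℂ) * (Nat.fib j : ℂ)) ^ (n - k) *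
      Polynomial.aeval x (eulerPoly (n - k))
      = 2 * (((Real.sqrt 5 : ℂ) * x + (1 - (Real.sqrt 5 : ℂ)) / 2) * (Nat.fib j : ℂ)
          + (Nat.fib (j - 1) : ℂ)) ^ n := by
  have hsq : (Real.sqrt 5 : ℂ) = sq5 := rfl
  have hpsiC : (1 - sq5) / 2 = psiC := rfl
  rw [hsq, hpsiC]
  set F : ℂ := (Nat.fib j : ℂ) with hF
  set s : ℂ := sq5 * F with hsdef
  have hs : s = phiC ^ j - psiC ^ j := by rw [hsdef, mul_comm, hF, fibC]
  have h5ne : sq5 ≠ 0 := Complex.ofReal_ne_zero.mpr (by positivity)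
  have hFne : F ≠ 0 := by
    rw [hF]
    exact Nat.cast_ne_zero.mpr (Nat.fib_pos.mpr hj).ne'
  have hsne : s ≠ 0 := by rw [hsdef]; exact mul_ne_zero h5ne hFne
  have hψj : psiC * F + (Nat.fib (j - 1) : ℂ) = psiC ^ j := by
    obtain ⟨i, rfl⟩ : ∃ i, j = i + 1 := ⟨j - 1, by omega⟩
    simp only [Nat.add_sub_cancel, hF]
    exact (psi_pow i).symm
  have hsplit : ∀ k ∈ range (n + 1),
      (n.choose k : ℂ) * (lucas (j * k) : ℂ) * s ^ (n - k) * aeval x (eulerPoly (n - k))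
        = (n.choose k : ℂ) * (phiC ^ j) ^ k * s ^ (n - k) * aeval x (eulerPoly (n - k))
          + (n.choose k : ℂ) * (psiC ^ j) ^ k * s ^ (n - k) * aeval x (eulerPoly (n - k)) := by
    intro k _
    rw [lucasC, pow_mul, pow_mul]
    ring
  rw [sum_congr rfl hsplit, Finset.sum_add_distrib, scaled n x _ s hsne, scaled n x _ s hsne,
    ← mul_add]
  have h1 : x + phiC ^ j / s = (x + psiC ^ j / s) + 1 := by
    field_simp
    linear_combination -hs
  rw [h1, complement]
  have h3 : (sq5 * x + psiC) * F + (Nat.fib (j - 1) : ℂ) = s * (x + psiC ^ j / s) := by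
    rw [mul_add, mul_div_cancel₀ _ hsne, ← hψj, hsdef]
    ring
  rw [h3, mul_pow]
  field_simp
  have hsn : sq5 ^ n * F ^ n = s ^ n := by rw [hsdef, mul_pow]
  rw [hsn, ← mul_pow]
  congr 1
  field_simp
end

section
/- For all n ≥ 1, j ≥ 1, and odd q ≥ 1, ∑_{k=0}^{n} C(n,k) (√5 F_j)^{n-k} (q^{-(n-k)} - 1) L_{jk} E_{n-k}(0) = 2 q^{-n} ∑_{r=1}^{q-1} (-1)^r (r α^j + (q-r) β^j)^n, where α = (1+√5)/2 and β = (1-√5)/2. -/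
open Finset

noncomputable def ee (m : ℕ) : ℝ := ((eulerPoly m).eval 0 : ℚ)

lemma ee_zero : ee 0 = 1 := by
  rw [ee, eulerPoly]; simp

lemma ee_rec (p : ℕ) (hp : 1 ≤ p) :
    2 * ee p + ∑ m ∈ Finset.range p, (p.choose m : ℝ) * ee m = 0 := by
  have h : (eulerPoly p).eval 0 =
      0 - (1/2 : ℚ) * ∑ m ∈ Finset.range p, (p.choose m : ℚ) * (eulerPoly m).eval 0 := by
    conv_lhs => rw [eulerPoly]
    simp [Polynomial.eval_finset_sum, zero_pow (by omega : p ≠ 0)]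
    exact Fin.sum_univ_eq_sum_range (fun m => (p.choose m : ℚ) * (eulerPoly m).eval 0) p
  simp only [ee]
  push_cast [h]
  ring

lemma S_eq (p : ℕ) :
    (∑ m ∈ range (p + 1), (p.choose m : ℝ) * ee m) + ee p
      = if p = 0 then 2 else 0 := by
  rcases Nat.eq_zero_or_pos p with rfl | hp
  · simp [ee_zero]; norm_num
  · have := ee_rec p hp
    rw [sum_range_succ]
    simp only [Nat.choose_self, Nat.cast_one, one_mul, if_neg (by omega : p ≠ 0)]
    linarith

noncomputable def eps (n : ℕ) (d x : ℝ) : ℝ :=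
  ∑ k ∈ range (n + 1), (n.choose k : ℝ) * ee (n - k) * d ^ (n - k) * x ^ k

lemma tri (n : ℕ) (f : ℕ → ℕ → ℝ) :
    (∑ k ∈ range (n + 1), ∑ j ∈ range (k + 1), f k j)
      = ∑ j ∈ range (n + 1), ∑ k ∈ Ico j (n + 1), f k j := by
  simpa [Nat.Ico_zero_eq_range] using (sum_Ico_Ico_comm 0 (n+1) (fun j k => f k j)).symm

lemma A1 (n : ℕ) (d x : ℝ) : eps n d (x + d) + eps n d x = 2 * x ^ n := by
  have expand : eps n d (x + d)
      = ∑ j ∈ range (n + 1), ∑ k ∈ Ico j (n + 1),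
          (n.choose k : ℝ) * ee (n - k) * d ^ (n - k) * (x ^ j * d ^ (k - j) * (k.choose j : ℝ)) := by
    rw [eps]
    simp_rw [add_pow, mul_sum]
    exact tri n _
  have refl_sum : ∀ p : ℕ, (∑ i ∈ range (p+1), ((p.choose i : ℝ)) * ee (p - i))
      = ∑ m ∈ range (p+1), (p.choose m : ℝ) * ee m := by
    intro p
    rw [← sum_range_reflect (fun i => (p.choose i : ℝ) * ee (p - i)) (p+1)]
    refine sum_congr rfl fun j hj => ?_
    simp only [mem_range] at hj
    rw [show p + 1 - 1 - j = p - j from by omega, Nat.choose_symm (by omega : j ≤ p),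
      show p - (p - j) = j from by omega]
  have step : ∀ j ∈ range (n + 1), (∑ k ∈ Ico j (n + 1),
        (n.choose k : ℝ) * ee (n - k) * d ^ (n - k) * (x ^ j * d ^ (k - j) * (k.choose j : ℝ)))
      = x ^ j * (n.choose j : ℝ) * d ^ (n - j) *
          (∑ m ∈ range (n - j + 1), ((n - j).choose m : ℝ) * ee m) := by
    intro j hj
    simp only [mem_range] at hj
    rw [sum_Ico_eq_sum_range, show n + 1 - j = n - j + 1 from by omega, ← refl_sum (n - j),
      mul_sum]
    refine sum_congr rfl fun i hi => ?_
    simp only [mem_range] at hi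
    have hc : ((n.choose (j + i) : ℝ)) * (((j + i).choose j : ℝ))
        = (n.choose j : ℝ) * ((n - j).choose i : ℝ) := by
      have := Nat.choose_mul (n := n) (Nat.le_add_right j i)
      rw [show j + i - j = i from by omega] at this
      exact_mod_cast this
    have hd : d ^ (n - (j + i)) * d ^ (j + i - j) = d ^ (n - j) := by
      rw [← pow_add]; congr 1; omega
    calc (n.choose (j + i) : ℝ) * ee (n - (j + i)) * d ^ (n - (j + i)) *
            (x ^ j * d ^ (j + i - j) * ((j + i).choose j : ℝ))
        = ((n.choose (j + i) : ℝ) * ((j + i).choose j : ℝ)) *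
            (d ^ (n - (j + i)) * d ^ (j + i - j)) * ee (n - (j + i)) * x ^ j := by ring
      _ = ((n.choose j : ℝ) * ((n - j).choose i : ℝ)) * d ^ (n - j) * ee (n - (j + i)) * x ^ j := by
          rw [hc, hd]
      _ = x ^ j * (n.choose j : ℝ) * d ^ (n - j) * (((n - j).choose i : ℝ) * ee (n - (j + i))) := by
          ring
      _ = x ^ j * (n.choose j : ℝ) * d ^ (n - j) * (((n - j).choose i : ℝ) * ee (n - j - i)) := by
          rw [show n - (j + i) = n - j - i from by omega]
  rw [expand, sum_congr rfl step, eps, ← sum_add_distrib]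
  have final : ∀ j ∈ range (n + 1),
      (x ^ j * (n.choose j : ℝ) * d ^ (n - j) *
          (∑ m ∈ range (n - j + 1), ((n - j).choose m : ℝ) * ee m)
        + (n.choose j : ℝ) * ee (n - j) * d ^ (n - j) * x ^ j)
      = if j = n then 2 * x ^ n else 0 := by
    intro j hj
    simp only [mem_range] at hj
    have : x ^ j * (n.choose j : ℝ) * d ^ (n - j) *
          (∑ m ∈ range (n - j + 1), ((n - j).choose m : ℝ) * ee m)
        + (n.choose j : ℝ) * ee (n - j) * d ^ (n - j) * x ^ j
        = x ^ j * (n.choose j : ℝ) * d ^ (n - j) *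
          ((∑ m ∈ range (n - j + 1), ((n - j).choose m : ℝ) * ee m) + ee (n - j)) := by ring
    rw [this, S_eq]
    rcases eq_or_ne j n with rfl | hne
    · simp only [Nat.sub_self, if_pos rfl, if_true, Nat.choose_self, Nat.cast_one]
      norm_num
      ring
    · rw [if_neg (by omega), if_neg hne, mul_zero]
  rw [sum_congr rfl final, sum_ite_eq' (range (n + 1)) n (fun _ => 2 * x ^ n),
    if_pos (self_mem_range_succ n)]

lemma A2 (n : ℕ) (d x : ℝ) : ∀ t : ℕ,
    ∑ r ∈ range (2*t+1), (-1:ℝ)^r * (x + (r : ℝ)*d)^n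
      = (eps n d x + eps n d (x + (2*t+1)*d))/2
  | 0 => by
      have h := A1 n d x
      norm_num
      linarith
  | (t+1) => by
      have IH := A2 n d x t
      have h1 := A1 n d (x + (2*(t:ℝ)+1)*d)
      have h2 := A1 n d (x + (2*(t:ℝ)+2)*d)
      rw [show x + (2*(t:ℝ)+1)*d + d = x + (2*(t:ℝ)+2)*d by ring] at h1
      rw [show x + (2*(t:ℝ)+2)*d + d = x + (2*(t:ℝ)+3)*d by ring] at h2
      rw [show 2*(t+1)+1 = (2*t+1) + 1 + 1 by ring, sum_range_succ, sum_range_succ, IH]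
      have hodd : (-1:ℝ)^(2*t+1) = -1 := Odd.neg_one_pow ⟨t, by ring⟩
      have heven : (-1:ℝ)^(2*t+1+1) = 1 := Even.neg_one_pow ⟨t+1, by ring⟩
      rw [hodd, heven]
      push_cast
      rw [show x + (2*((t:ℝ)+1)+1)*d = x + (2*(t:ℝ)+3)*d by ring]
      linarith

open goldenRatio in
lemma lucas_binet : ∀ m : ℕ, (lucas m : ℝ) = φ ^ m + ψ ^ m
  | 0 => by norm_num [lucas]
  | 1 => by simp [lucas, pow_one, Real.goldenRatio_add_goldenConj]
  | (m+2) => by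
      have h1 := lucas_binet (m+1)
      have h2 := lucas_binet m
      show ((lucas (m+1) + lucas m : ℕ) : ℝ) = _
      push_cast [h1, h2]
      have h5 : Real.sqrt 5 ^ 2 = 5 := Real.sq_sqrt (by norm_num)
      linear_combination (Real.goldenRatio^m) * Real.goldenRatio_sq + (Real.goldenConj^m) * Real.goldenConj_sq
        - ((Real.goldenRatio^m + Real.goldenConj^m)/2) * h5

open goldenRatio in
lemma fib_binet (m : ℕ) : φ ^ m - ψ ^ m = Real.sqrt 5 * (Nat.fib m : ℝ) := by
  rw [Real.coe_fib_eq]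
  have h5 : Real.sqrt 5 ≠ 0 := by positivity
  field_simp

lemma fib_binet' (m : ℕ) :
    ((1 + Real.sqrt 5)/2) ^ m - ((1 - Real.sqrt 5)/2) ^ m = Real.sqrt 5 * (Nat.fib m : ℝ) :=
  fib_binet m

lemma lucas_binet' (m : ℕ) :
    (lucas m : ℝ) = ((1 + Real.sqrt 5)/2) ^ m + ((1 - Real.sqrt 5)/2) ^ m :=
  lucas_binet m

theorem stmt19 (n j q : ℕ) (hn : 1 ≤ n) (hj : 1 ≤ j) (hq : 1 ≤ q) (hodd : Odd q) :
    ∑ k ∈ Finset.range (n + 1), (n.choose k : ℝ) *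
      (Real.sqrt 5 * (Nat.fib j : ℝ)) ^ (n - k) *
      ((q : ℝ) ^ (-((n : ℤ) - k)) - 1) * (lucas (j * k) : ℝ) *
      (((eulerPoly (n - k)).eval 0 : ℚ) : ℝ)
      = 2 * (q : ℝ) ^ (-(n : ℤ)) *
        ∑ r ∈ Finset.Icc 1 (q - 1), (-1 : ℝ) ^ r *
          ((r : ℝ) * ((1 + Real.sqrt 5) / 2) ^ j +
           ((q : ℝ) - r) * ((1 - Real.sqrt 5) / 2) ^ j) ^ n := by
  obtain ⟨t, ht⟩ := hodd
  have ht' : q = 2 * t + 1 := by omega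
  have hq0 : (0:ℝ) < (q:ℝ) := by exact_mod_cast Nat.lt_of_lt_of_le Nat.zero_lt_one hq
  have hqne : (q:ℝ) ≠ 0 := ne_of_gt hq0
  have hpow : ((q:ℝ) ^ n) ≠ 0 := pow_ne_zero n hqne
  simp only [show ∀ m : ℕ, (((eulerPoly m).eval 0 : ℚ) : ℝ) = ee m from fun m => rfl]
  set X : ℝ := ((1 + Real.sqrt 5)/2) ^ j with hX
  set Y : ℝ := ((1 - Real.sqrt 5)/2) ^ j with hY
  set d : ℝ := Real.sqrt 5 * (Nat.fib j : ℝ) with hdd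
  have hd : X - Y = d := fib_binet' j
  have hXY : X = Y + d := by linarith
  have hA1 : eps n d Y + eps n d X = 2 * Y ^ n := by
    have h := A1 n d Y
    rw [← hXY] at h
    linarith
  have hL : ∀ k ∈ Finset.range (n+1),
      (n.choose k : ℝ) * d ^ (n-k) * ((q:ℝ) ^ (-((n:ℤ) - k)) - 1) * (lucas (j*k) : ℝ) * ee (n-k)
      = ((q:ℝ)^n)⁻¹ * ((n.choose k : ℝ) * ee (n-k) * d^(n-k) * ((q:ℝ)*Y)^k
            + (n.choose k : ℝ) * ee (n-k) * d^(n-k) * ((q:ℝ)*X)^k)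
        - ((n.choose k : ℝ) * ee (n-k) * d^(n-k) * Y^k
            + (n.choose k : ℝ) * ee (n-k) * d^(n-k) * X^k) := by
    intro k hk
    simp only [Finset.mem_range] at hk
    have hz : (q:ℝ) ^ (-((n:ℤ) - k)) = ((q:ℝ)^n)⁻¹ * (q:ℝ)^k := by
      rw [show -((n:ℤ) - k) = (k:ℤ) + (-(n:ℤ)) by ring, zpow_add₀ hqne, zpow_natCast,
        zpow_neg, zpow_natCast]
      ring
    have hlu : (lucas (j*k) : ℝ) = X ^ k + Y ^ k := by
      rw [lucas_binet' (j*k), hX, hY, ← pow_mul, ← pow_mul]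
    rw [hz, hlu, mul_pow, mul_pow]
    ring
  have hsum : ∑ r ∈ Finset.range q, (-1:ℝ)^r * ((q:ℝ)*Y + (r:ℝ)*d)^n
      = (eps n d ((q:ℝ)*Y) + eps n d ((q:ℝ)*X))/2 := by
    have h := A2 n d ((q:ℝ)*Y) t
    rw [show (2*t+1 : ℕ) = q from ht'.symm] at h
    rw [show (q:ℝ)*Y + (2*(t:ℝ)+1)*d = (q:ℝ)*X by
      rw [hXY, show (2*(t:ℝ)+1) = (q:ℝ) by rw [ht']; push_cast; ring]; ring] at h
    exact h
  have hsplit : ∑ r ∈ Finset.range q, (-1:ℝ)^r * ((q:ℝ)*Y + (r:ℝ)*d)^n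
      = ((q:ℝ)*Y)^n + ∑ r ∈ Finset.Icc 1 (q-1), (-1:ℝ)^r * ((q:ℝ)*Y + (r:ℝ)*d)^n := by
    have hicc : Finset.Icc 1 (q-1) = (Finset.range q).erase 0 := by
      ext r
      simp only [Finset.mem_Icc, Finset.mem_erase, Finset.mem_range]
      omega
    rw [hicc, ← Finset.add_sum_erase _ _ (Finset.mem_range.mpr (by omega : 0 < q))]
    norm_num
  have hmatch : ∀ r ∈ Finset.Icc 1 (q-1),
      (-1:ℝ)^r * ((r:ℝ) * X + ((q:ℝ) - r) * Y)^n = (-1:ℝ)^r * ((q:ℝ)*Y + (r:ℝ)*d)^n := by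
    intro r _
    rw [show (r:ℝ) * X + ((q:ℝ) - r) * Y = (q:ℝ)*Y + (r:ℝ)*d by rw [← hd]; ring]
  rw [Finset.sum_congr rfl hL, Finset.sum_sub_distrib, ← Finset.mul_sum,
    Finset.sum_add_distrib, Finset.sum_add_distrib, Finset.sum_congr rfl hmatch,
    show (q:ℝ) ^ (-(n:ℤ)) = ((q:ℝ)^n)⁻¹ by rw [zpow_neg, zpow_natCast]]
  rw [hsum, mul_pow] at hsplit
  have hQ : ((q:ℝ)^n)⁻¹ * (q:ℝ)^n = 1 := inv_mul_cancel₀ hpow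
  simp only [eps] at hsplit hA1
  linear_combination (2*((q:ℝ)^n)⁻¹) * hsplit - hA1 + (2*Y^n) * hQ
end
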